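/- If x is a bi-infinite sequence which is not eventually periodic to the right, X is its orbit closure, n ∈ ℕ, and w is a subword of x of length at least c_X(n) + n, then w contains a right-special word of X of length n. -/

import Mathlib

open Filter Topology MeasureTheory

variable {A : Type*} {B : Type*}

/-- The shift by `m` on bi-infinite sequences. -/
def shiftBy (m : ℤ) (x : ℤ → A) : ℤ → A := fun i => x (i + m)

/-- The orbit closure of a point. -/
def orbitClosure [TopologicalSpace A] (x : ℤ → A) : Set (ℤ → A) :=
  closure {y | ∃ m : ℤ, y = shiftBy m x}

/-- A set of sequences invariant under all shifts. -/
def ShiftInvariant (X : Set (ℤ → A)) : Prop := ∀ m : ℤ, ∀ y ∈ X, shiftBy m y ∈ X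

/-- A subshift: closed and shift-invariant. -/
def IsSubshift [TopologicalSpace A] (X : Set (ℤ → A)) : Prop :=
  IsClosed X ∧ ShiftInvariant X

/-- The word `w` occurs in `x` at position `i`. -/
def occursAt (x : ℤ → A) (w : List A) (i : ℤ) : Prop :=
  ∀ k : Fin w.length, x (i + (k.val : ℤ)) = w.get k

/-- The word `w` occurs somewhere in some point of `X`. -/
def WordIn (X : Set (ℤ → A)) (w : List A) : Prop :=
  ∃ x ∈ X, ∃ i : ℤ, occursAt x w i

/-- The language of `X` in length `n`. -/
def langOf (X : Set (ℤ → A)) (n : ℕ) : Set (List A) :=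
  {w | w.length = n ∧ WordIn X w}

/-- The complexity function of `X`. -/
noncomputable def complexity (X : Set (ℤ → A)) (n : ℕ) : ℕ := (langOf X n).ncard

/-- `w` is right-special in `X`. -/
def RightSpecial (X : Set (ℤ → A)) (w : List A) : Prop :=
  ∃ a b : A, a ≠ b ∧ WordIn X (w ++ [a]) ∧ WordIn X (w ++ [b])

/-- `w` is left-special in `X`. -/
def LeftSpecial (X : Set (ℤ → A)) (w : List A) : Prop :=
  ∃ a b : A, a ≠ b ∧ WordIn X (a :: w) ∧ WordIn X (b :: w)

/-- The set of right-special words of length `n`. -/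
def RS (X : Set (ℤ → A)) (n : ℕ) : Set (List A) :=
  {w | w.length = n ∧ RightSpecial X w}

/-- The length-`ℓ` word of `x` starting at position `i`. -/
def wordAt (x : ℤ → A) (i : ℤ) (ℓ : ℕ) : List A :=
  List.ofFn (fun t : Fin ℓ => x (i + (t.val : ℤ)))

/-- `x` is a recurrent point: every word in it occurs infinitely often. -/
def RecurrentPt (x : ℤ → A) : Prop :=
  ∀ n : ℕ, ∀ i N : ℤ, ∃ j : ℤ, N ≤ j ∧ ∀ k : ℕ, k < n → x (j + k) = x (i + k)

/-- `x` is eventually periodic to the right. -/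
def EventuallyPeriodicRight (x : ℤ → A) : Prop :=
  ∃ p : ℤ, 0 < p ∧ ∃ N : ℤ, ∀ i : ℤ, N < i → x (i + p) = x i

/-- `x` is eventually periodic to the left. -/
def EventuallyPeriodicLeft (x : ℤ → A) : Prop :=
  ∃ p : ℤ, 0 < p ∧ ∃ N : ℤ, ∀ i : ℤ, i < N → x (i - p) = x i

/-- `M` is a minimal subsystem of `X`. -/
def MinimalSubsystem [TopologicalSpace A] (X M : Set (ℤ → A)) : Prop :=
  M ⊆ X ∧ M.Nonempty ∧ IsClosed M ∧ ShiftInvariant M ∧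
    ∀ M' ⊆ M, M'.Nonempty → IsClosed M' → ShiftInvariant M' → M' = M

/-- `x` is a generic point for the measure `μ`. -/
def GenericFor [TopologicalSpace A] [MeasurableSpace A] (x : ℤ → A)
    (μ : Measure (ℤ → A)) : Prop :=
  ∀ f : (ℤ → A) → ℝ, Continuous f →
    Tendsto (fun N : ℕ => (∑ i ∈ Finset.range N, f (shiftBy i x)) / (N : ℝ)) atTop
      (𝓝 (∫ y, f y ∂μ))

/-- `μ` is a generic measure for `X`. -/
def GenericMeasure [TopologicalSpace A] [MeasurableSpace A] (X : Set (ℤ → A))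
    (μ : Measure (ℤ → A)) : Prop :=
  ∃ x ∈ X, GenericFor x μ

/-!
If no position of the window carried a right-special word, then, as the window has more
positions than `X` has words of length `n`, some word would occur at two positions
`j₁ < j₂` of it. Each word between them has a unique one-letter extension, so the words of `x`
from `j₁` on repeat with period `j₂ - j₁` forever, and `x` would be eventually periodic.
-/

lemma mem_orbitClosure_self [TopologicalSpace A] (x : ℤ → A) : x ∈ orbitClosure x :=
  subset_closure ⟨0, by funext i; simp [shiftBy]⟩

section Words

variable {X : Set (ℤ → A)} {x : ℤ → A}

lemma wordAt_length (x : ℤ → A) (i : ℤ) (ℓ : ℕ) : (wordAt x i ℓ).length = ℓ := by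
  simp [wordAt]

lemma wordAt_succ (x : ℤ → A) (i : ℤ) (ℓ : ℕ) :
    wordAt x i (ℓ + 1) = wordAt x i ℓ ++ [x (i + ℓ)] := by
  simp only [wordAt, List.ofFn_succ']
  simp [List.concat_eq_append]

lemma wordAt_succ_eq_cons (x : ℤ → A) (i : ℤ) (ℓ : ℕ) :
    wordAt x i (ℓ + 1) = x i :: wordAt x (i + 1) ℓ := by
  simp only [wordAt, List.ofFn_succ, Fin.val_zero, Fin.val_succ]
  congr 2
  · simp
  · funext t; congr 1; push_cast; ring

lemma wordIn_wordAt (hx : x ∈ X) (i : ℤ) (ℓ : ℕ) : WordIn X (wordAt x i ℓ) := by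
  refine ⟨x, hx, i, fun k => ?_⟩
  rw [List.get_eq_getElem]
  simp [wordAt]

lemma wordAt_succ_eq_of_not_rightSpecial (hx : x ∈ X) {n : ℕ} {s t : ℤ}
    (hs : ¬ RightSpecial X (wordAt x s n)) (hts : wordAt x t n = wordAt x s n) :
    wordAt x t (n + 1) = wordAt x s (n + 1) := by
  have hletter : x (t + n) = x (s + n) := by
    by_contra hne
    refine hs ⟨x (t + n), x (s + n), hne, ?_, ?_⟩
    · rw [← hts, ← wordAt_succ]; exact wordIn_wordAt hx _ _
    · rw [← wordAt_succ]; exact wordIn_wordAt hx _ _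
  rw [wordAt_succ, wordAt_succ, hts, hletter]

lemma wordAt_add_one_eq_of_succ_eq {n : ℕ} {s t : ℤ}
    (h : wordAt x t (n + 1) = wordAt x s (n + 1)) : wordAt x (t + 1) n = wordAt x (s + 1) n := by
  rw [wordAt_succ_eq_cons, wordAt_succ_eq_cons] at h
  exact (List.cons_eq_cons.mp h).2

lemma apply_add_eq_of_succ_eq {n : ℕ} {s t : ℤ}
    (h : wordAt x t (n + 1) = wordAt x s (n + 1)) : x (t + n) = x (s + n) := by
  rw [wordAt_succ, wordAt_succ] at h
  simpa using (List.append_inj' h rfl).2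

lemma exists_lt_wordAt_eq [Finite A] (hx : x ∈ X) {n m : ℕ} (hm : complexity X n + n ≤ m)
    (i : ℤ) :
    ∃ j₁ j₂ : ℕ, j₁ < j₂ ∧ j₂ + n ≤ m ∧ wordAt x (i + j₁) n = wordAt x (i + j₂) n := by
  have hfin : (langOf X n).Finite := (List.finite_length_eq A n).subset fun w hw => hw.1
  have hcard : hfin.toFinset.card < (Finset.range (m - n + 1)).card := by
    rw [Finset.card_range, ← Set.ncard_eq_toFinset_card _ hfin]
    exact Nat.lt_succ_of_le (Nat.le_sub_of_add_le hm)
  obtain ⟨a, ha, b, hb, hab, heq⟩ := Finset.exists_ne_map_eq_of_card_lt_of_maps_to hcard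
    (f := fun j => wordAt x (i + j) n)
    fun j _ => hfin.mem_toFinset.mpr ⟨wordAt_length x _ n, wordIn_wordAt hx _ n⟩
  rw [Finset.mem_range] at ha hb
  rcases hab.lt_or_gt with h | h
  · exact ⟨a, b, h, by omega, heq⟩
  · exact ⟨b, a, h, by omega, heq.symm⟩

/-- Invariant of the induction: every later word of `x` and its translate by `p` both coincide
with one word on the return path, so both are extended by the same letter. -/
lemma eventuallyPeriodicRight_of_wordAt_eq (hx : x ∈ X) {n p : ℕ} {a : ℤ} (hp : 0 < p)
    (hrep : wordAt x (a + p) n = wordAt x a n)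
    (hns : ∀ r < p, ¬ RightSpecial X (wordAt x (a + r) n)) : EventuallyPeriodicRight x := by
  have key : ∀ k : ℕ, ∃ r < p,
      wordAt x (a + k) n = wordAt x (a + r) n ∧ wordAt x (a + k + p) n = wordAt x (a + r) n := by
    intro k
    induction k with
    | zero => exact ⟨0, hp, rfl, by simpa using hrep⟩
    | succ k ih =>
      obtain ⟨r, hr, hk, hkp⟩ := ih
      have hk' := wordAt_add_one_eq_of_succ_eq (wordAt_succ_eq_of_not_rightSpecial hx (hns r hr) hk)
      have hkp' :=
        wordAt_add_one_eq_of_succ_eq (wordAt_succ_eq_of_not_rightSpecial hx (hns r hr) hkp)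
      rw [add_right_comm] at hkp'
      push_cast
      rcases Nat.lt_or_ge (r + 1) p with hlt | hge
      · exact ⟨r + 1, hlt, by rw [← add_assoc, hk']; push_cast; ring_nf,
          by rw [← add_assoc, hkp']; push_cast; ring_nf⟩
      · have hret : wordAt x (a + r + 1) n = wordAt x a n := by
          rw [← hrep]; congr 1; omega
        exact ⟨0, hp, by rw [← add_assoc, hk', hret]; simp,
          by rw [← add_assoc, hkp', hret]; simp⟩
  refine ⟨p, by exact_mod_cast hp, a + n, fun i hi => ?_⟩
  obtain ⟨k, hk⟩ := Int.eq_ofNat_of_zero_le (by omega : 0 ≤ i - a - n)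
  obtain ⟨r, hr, hkr, hkpr⟩ := key k
  have h₁ := apply_add_eq_of_succ_eq (wordAt_succ_eq_of_not_rightSpecial hx (hns r hr) hkr)
  have h₂ := apply_add_eq_of_succ_eq (wordAt_succ_eq_of_not_rightSpecial hx (hns r hr) hkpr)
  calc x (i + p) = x (a + k + p + n) := by congr 1; omega
    _ = x (a + k + n) := h₂.trans h₁.symm
    _ = x i := by congr 1; omega

end Words

theorem stmt8_general [Fintype A] [TopologicalSpace A]
    (x : ℤ → A) (X : Set (ℤ → A)) (hX : X = orbitClosure x)
    (hnp : ¬ EventuallyPeriodicRight x) (n : ℕ)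
    (i : ℤ) (m : ℕ) (hm : complexity X n + n ≤ m) :
    ∃ j : ℕ, j + n ≤ m ∧ wordAt x (i + j) n ∈ RS X n := by
  by_contra! hnone
  have hx : x ∈ X := hX ▸ mem_orbitClosure_self x
  obtain ⟨j₁, j₂, hlt, hj₂, hrep⟩ := exists_lt_wordAt_eq hx hm i
  refine hnp (eventuallyPeriodicRight_of_wordAt_eq hx (n := n) (a := i + j₁) (p := j₂ - j₁)
    (by omega) ?_ fun r hr hrs => hnone (j₁ + r) (by omega) ⟨wordAt_length x _ n, ?_⟩)
  · rw [hrep]; congr 1; push_cast [hlt.le]; ring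
  · rwa [Nat.cast_add, ← add_assoc]

theorem stmt8 [Fintype A] [TopologicalSpace A] [DiscreteTopology A]
    (x : ℤ → A) (X : Set (ℤ → A)) (hX : X = orbitClosure x)
    (hnp : ¬ EventuallyPeriodicRight x) (n : ℕ)
    (i : ℤ) (m : ℕ) (hm : complexity X n + n ≤ m) :
    ∃ j : ℕ, j + n ≤ m ∧ wordAt x (i + j) n ∈ RS X n :=
  stmt8_general x X hX hnp n i m hm
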